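/- For k ∈ (−π, π] let λ₀(k) = (2cos k)/3, λ₁(k) = (2cos k)/3 + (ξ(k) − 1/ξ(k))/3, λ₂(k) = (2cos k)/3 + (1/6)((−1 + i√3)ξ(k) + (1 + i√3)/ξ(k)) and λ₃(k) = conjugate of λ₂(k), where ξ(k) = (2cos k + √(4cos²k + 1))^{1/3}, and set α_n = ∫_{−π/2}^{π/2} λ₁(k)^n dk. Let g₀, g₁, g₂, g₃ be continuous 2π-periodic functions on ℝ (continuous functions on the circle (−π,π]). Then: (1) lim_{n→∞} (1/α_n) ∫_{−π}^{π} (g₀(k)λ₀(k)^n + g₂(k)λ₂(k)^n + g₃(k)λ₃(k)^n) dk = 0; (2) lim_{n→∞} (1/α_{2n}) ∫_{−π}^{π} g₁(k) λ₁(k)^{2n} dk = g₁(0) + g₁(π); (3) lim_{n→∞} (1/α_{2n−1}) ∫_{−π}^{π} g₁(k) λ₁(k)^{2n−1} dk = g₁(0) − g₁(π). -/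

import Mathlib

/-!
With `x = ξ - 1/ξ`, the identities `ξ³ = 2cos k + √(4cos²k + 1)` and
`ξ⁻³ = √(4cos²k + 1) - 2cos k` give the cubic `x³ + 3x = 4cos k`; as `t ↦ t³ + 3t` is strictly
increasing, `|x| ≤ 1`, and `λ₁ = (2cos k + x)/3` is nonnegative on `[-π/2, π/2]` with its strict
maximum `1` at `k = 0`. Hence `λ₁ⁿ / αₙ` is a peak kernel at `0` (Laplace's method), and `αₙ`
decays more slowly than `(9/10)ⁿ`, whereas `|λ₀|, |λ₂|, |λ₃| ≤ 5/6`, which gives (1).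
Since `λ₁(k + π) = -λ₁(k)`, folding `[-π, π]` onto `[-π/2, π/2]` turns `∫ g₁ λ₁ⁿ` into
`∫ (g₁(k) + (-1)ⁿ g₁(k + π)) λ₁ⁿ`, whose normalised limit is `g₁(0) + (-1)ⁿ g₁(π)`.
-/

open MeasureTheory Filter

/-- `ξ(k) = (2cos k + √(4cos²k + 1))^{1/3}`. -/
noncomputable def xiFun (k : ℝ) : ℝ :=
  (2 * Real.cos k + Real.sqrt (4 * Real.cos k ^ 2 + 1)) ^ ((1 : ℝ) / 3)

/-- The eigenvalue `λ₀(k) = 2cos k / 3`. -/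
noncomputable def lam0 (k : ℝ) : ℝ := 2 * Real.cos k / 3

/-- The eigenvalue `λ₁(k) = 2cos k / 3 + (ξ(k) - 1/ξ(k))/3`. -/
noncomputable def lam1 (k : ℝ) : ℝ := 2 * Real.cos k / 3 + (xiFun k - 1 / xiFun k) / 3

/-- The eigenvalue `λ₂(k) = 2cos k / 3 + (1/6)((-1+i√3)ξ(k) + (1+i√3)/ξ(k))`. -/
noncomputable def lam2 (k : ℝ) : ℂ :=
  2 * (Real.cos k : ℂ) / 3 +
    (1 / 6 : ℂ) * ((-1 + Complex.I * (Real.sqrt 3 : ℂ)) * (xiFun k : ℂ) +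
      (1 + Complex.I * (Real.sqrt 3 : ℂ)) / (xiFun k : ℂ))

/-- The eigenvalue `λ₃(k)`, the complex conjugate of `λ₂(k)`. -/
noncomputable def lam3 (k : ℝ) : ℂ := starRingEnd ℂ (lam2 k)

/-- The scaling constants `α_n = ∫_{-π/2}^{π/2} λ₁(k)^n dk`. -/
noncomputable def alphaScale (n : ℕ) : ℝ :=
  ∫ k in (-(Real.pi / 2))..(Real.pi / 2), lam1 k ^ n

open Real Set Topology

lemma strictMono_cube_add_three_mul : StrictMono fun t : ℝ => t ^ 3 + 3 * t := by
  intro a b hab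
  -- `b³ + 3b - (a³ + 3a) = (b - a)((a + b/2)² + 3b²/4 + 3)`
  nlinarith [mul_pos (sub_pos.2 hab) (add_pos_of_nonneg_of_pos (sq_nonneg (a + b / 2))
    (show (0 : ℝ) < 3 * b ^ 2 / 4 + 3 by positivity))]

lemma two_mul_cos_add_sqrt_pos (k : ℝ) : 0 < 2 * cos k + √(4 * cos k ^ 2 + 1) := by
  have hs := sq_sqrt (show 0 ≤ 4 * cos k ^ 2 + 1 by positivity)
  nlinarith [sqrt_nonneg (4 * cos k ^ 2 + 1)]

lemma xiFun_pos (k : ℝ) : 0 < xiFun k := rpow_pos_of_pos (two_mul_cos_add_sqrt_pos k) _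

lemma xiFun_pow_three (k : ℝ) : xiFun k ^ 3 = 2 * cos k + √(4 * cos k ^ 2 + 1) := by
  rw [xiFun, ← rpow_natCast, ← rpow_mul (two_mul_cos_add_sqrt_pos k).le]
  norm_num

lemma inv_xiFun_pow_three (k : ℝ) : (xiFun k)⁻¹ ^ 3 = √(4 * cos k ^ 2 + 1) - 2 * cos k := by
  have hs := sq_sqrt (show 0 ≤ 4 * cos k ^ 2 + 1 by positivity)
  rw [inv_pow, inv_eq_iff_eq_inv]
  refine eq_inv_of_mul_eq_one_left ?_
  rw [xiFun_pow_three]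
  linear_combination hs

lemma cube_add_three_mul_xiFun_sub (k : ℝ) :
    (xiFun k - 1 / xiFun k) ^ 3 + 3 * (xiFun k - 1 / xiFun k) = 4 * cos k := by
  have hξ := (xiFun_pos k).ne'
  have expand : (xiFun k - 1 / xiFun k) ^ 3 + 3 * (xiFun k - 1 / xiFun k)
      = xiFun k ^ 3 - (xiFun k)⁻¹ ^ 3 := by
    field_simp; ring
  rw [expand, xiFun_pow_three, inv_xiFun_pow_three]; ring



lemma abs_xiFun_sub_le_one (k : ℝ) : |xiFun k - 1 / xiFun k| ≤ 1 := by
  have h := cube_add_three_mul_xiFun_sub k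
  refine abs_le.2 ⟨strictMono_cube_add_three_mul.le_iff_le.1 ?_,
    strictMono_cube_add_three_mul.le_iff_le.1 ?_⟩ <;>
  · simp only [h]; linarith [neg_one_le_cos k, cos_le_one k]

lemma xiFun_sub_lt_one {k : ℝ} (hk : cos k < 1) : xiFun k - 1 / xiFun k < 1 := by
  refine strictMono_cube_add_three_mul.lt_iff_lt.1 ?_
  simp only [cube_add_three_mul_xiFun_sub]; linarith

lemma xiFun_sub_nonneg {k : ℝ} (hk : 0 ≤ cos k) : 0 ≤ xiFun k - 1 / xiFun k := by
  refine strictMono_cube_add_three_mul.le_iff_le.1 ?_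
  simp only [cube_add_three_mul_xiFun_sub]; linarith

lemma xiFun_zero_sub : xiFun 0 - 1 / xiFun 0 = 1 := by
  refine strictMono_cube_add_three_mul.injective ?_
  simp only [cube_add_three_mul_xiFun_sub, cos_zero]; norm_num


lemma xiFun_add_pi (k : ℝ) : xiFun (k + π) = (xiFun k)⁻¹ := by
  have hs := sq_sqrt (show 0 ≤ 4 * cos k ^ 2 + 1 by positivity)
  have hbase : 2 * cos (k + π) + √(4 * cos (k + π) ^ 2 + 1)
      = (2 * cos k + √(4 * cos k ^ 2 + 1))⁻¹ := by
    rw [cos_add_pi, neg_sq]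
    refine eq_inv_of_mul_eq_one_left ?_
    linear_combination hs
  rw [xiFun, hbase, inv_rpow (two_mul_cos_add_sqrt_pos k).le, ← xiFun]

lemma continuous_xiFun : Continuous xiFun :=
  (by fun_prop : Continuous fun k => 2 * cos k + √(4 * cos k ^ 2 + 1)).rpow_const
    fun k => Or.inl (two_mul_cos_add_sqrt_pos k).ne'

lemma continuous_lam1 : Continuous lam1 := by
  have := continuous_xiFun
  have := fun k => (xiFun_pos k).ne'
  unfold lam1
  fun_prop (disch := assumption)

lemma lam1_zero : lam1 0 = 1 := by
  rw [lam1, xiFun_zero_sub, cos_zero]; norm_num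

lemma lam1_lt_one {k : ℝ} (hk : cos k < 1) : lam1 k < 1 := by
  have := xiFun_sub_lt_one hk
  rw [lam1]; linarith

lemma lam1_nonneg {k : ℝ} (hk : k ∈ Icc (-(π / 2)) (π / 2)) : 0 ≤ lam1 k := by
  have hcos := cos_nonneg_of_mem_Icc hk
  have := xiFun_sub_nonneg hcos
  rw [lam1]; linarith

lemma lam1_add_pi (k : ℝ) : lam1 (k + π) = -lam1 k := by
  have := (xiFun_pos k).ne'
  rw [lam1, lam1, xiFun_add_pi, cos_add_pi]
  field_simp
  ring

lemma lam1_periodic : Function.Periodic lam1 (2 * π) := by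
  intro k
  rw [two_mul, ← add_assoc, lam1_add_pi, lam1_add_pi, neg_neg]

lemma normSq_lam2 (k : ℝ) :
    Complex.normSq (lam2 k) = ((xiFun k - 1 / xiFun k) ^ 3 + 2 * (xiFun k - 1 / xiFun k)) ^ 2 / 36
      + ((xiFun k - 1 / xiFun k) ^ 2 + 4) / 12 := by
  have hξ := (xiFun_pos k).ne'
  have h3 : √3 ^ 2 = 3 := sq_sqrt (by norm_num)
  have hcos := cube_add_three_mul_xiFun_sub k
  have hre : (lam2 k).re = 2 * cos k / 3 + (1 / xiFun k - xiFun k) / 6 := by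
    simp [lam2, Complex.div_re, Complex.normSq_ofReal, Complex.cos_ofReal_re]; field_simp; ring
  have him : (lam2 k).im = √3 * (xiFun k + 1 / xiFun k) / 6 := by
    simp [lam2, Complex.div_im, Complex.normSq_ofReal]; field_simp
  have hc : cos k = ((xiFun k - 1 / xiFun k) ^ 3 + 3 * (xiFun k - 1 / xiFun k)) / 4 := by
    linarith
  rw [Complex.normSq_apply, hre, him, hc,
    show ∀ a : ℝ, √3 * a / 6 * (√3 * a / 6) = √3 ^ 2 * a ^ 2 / 36 from fun a => by ring, h3]
  field_simp
  ring

lemma norm_lam2_le (k : ℝ) : ‖lam2 k‖ ≤ 5 / 6 := by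
  have hx := abs_xiFun_sub_le_one k
  have hsq : ‖lam2 k‖ ^ 2 ≤ 25 / 36 := by
    rw [Complex.sq_norm, normSq_lam2]
    set x := xiFun k - 1 / xiFun k
    have hx2 : x ^ 2 ≤ 1 := (sq_le_one_iff_abs_le_one x).2 hx
    nlinarith [sq_nonneg x, mul_nonneg (sq_nonneg x) (sub_nonneg.2 hx2),
      mul_nonneg (mul_nonneg (sq_nonneg x) (sq_nonneg x)) (sub_nonneg.2 hx2)]
  nlinarith [norm_nonneg (lam2 k)]

lemma norm_lam3_le (k : ℝ) : ‖lam3 k‖ ≤ 5 / 6 := by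
  rw [lam3, Complex.norm_conj]; exact norm_lam2_le k

lemma norm_lam0_le (k : ℝ) : ‖(lam0 k : ℂ)‖ ≤ 5 / 6 := by
  rw [Complex.norm_real, Real.norm_eq_abs, lam0, abs_div, abs_mul]
  have := abs_cos_le_one k
  norm_num; linarith

lemma exists_pos_mul_pow_le_intervalIntegral_pow {f : ℝ → ℝ} (hf : Continuous f)
    {a b x₀ r : ℝ} (hx₀ : x₀ ∈ Ioo a b) (hf₀ : ∀ x ∈ Icc a b, 0 ≤ f x) (hr : 0 ≤ r)
    (hrf : r < f x₀) : ∃ c > 0, ∀ n : ℕ, c * r ^ n ≤ ∫ x in a..b, f x ^ n := by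
  set U := Ioo a b ∩ f ⁻¹' Ioi r
  have hU : IsOpen U := isOpen_Ioo.inter (isOpen_Ioi.preimage hf)
  have hUab : U ⊆ Ioc a b := inter_subset_left.trans Ioo_subset_Ioc_self
  have hUfin : volume U ≠ ⊤ := ((measure_mono hUab).trans_lt measure_Ioc_lt_top).ne
  refine ⟨volume.real U, ENNReal.toReal_pos (hU.measure_pos volume ⟨x₀, hx₀, hrf⟩).ne' hUfin,
    fun n => ?_⟩
  have hint : IntegrableOn (fun x => f x ^ n) (Ioc a b) := (hf.pow n).integrableOn_Ioc
  rw [intervalIntegral.integral_of_le (hx₀.1.trans hx₀.2).le, mul_comm]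
  calc r ^ n * volume.real U ≤ ∫ x in U, f x ^ n :=
        setIntegral_ge_of_const_le_real hU.measurableSet hUfin
          (fun x hx => pow_le_pow_left₀ hr (le_of_lt hx.2) n) (hint.mono_set hUab)
    _ ≤ ∫ x in Ioc a b, f x ^ n :=
        setIntegral_mono_set hint (ae_restrict_of_forall_mem measurableSet_Ioc
          fun x hx => pow_nonneg (hf₀ x (Ioc_subset_Icc_self hx)) n) hUab.eventuallyLE

lemma Function.Periodic.intervalIntegral_eq_integral_add_shift {F : ℝ → ℝ} {T : ℝ}
    (hF : Function.Periodic F (2 * T)) (hc : Continuous F) (a b : ℝ) :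
    ∫ x in b..b + 2 * T, F x = ∫ x in a..a + T, (F x + F (x + T)) := by
  have hshift : Continuous fun x => F (x + T) := hc.comp (continuous_add_const T)
  rw [hF.intervalIntegral_add_eq b a, intervalIntegral.integral_add (hc.intervalIntegrable _ _)
    (hshift.intervalIntegrable _ _),
    intervalIntegral.integral_comp_add_right (fun x => F x),
    intervalIntegral.integral_add_adjacent_intervals (hc.intervalIntegrable _ _)
      (hc.intervalIntegrable _ _)]
  ring_nf

lemma integral_mul_lam1_pow_eq {g : ℝ → ℝ} (hg : Continuous g)
    (hp : Function.Periodic g (2 * π)) (n : ℕ) :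
    ∫ k in -π..π, g k * lam1 k ^ n
      = ∫ k in -(π / 2)..π / 2, (g k + (-1) ^ n * g (k + π)) * lam1 k ^ n := by
  have hF : Function.Periodic (fun k => g k * lam1 k ^ n) (2 * π) := fun k => by
    simp only [hp k, lam1_periodic k]
  have h := hF.intervalIntegral_eq_integral_add_shift (hg.mul (continuous_lam1.pow n)) (-(π / 2)) (-π)
  rw [show -π + 2 * π = π by ring, show -(π / 2) + π = π / 2 by ring] at h
  rw [h]
  refine intervalIntegral.integral_congr fun k _ => ?_
  rw [lam1_add_pi, neg_pow]
  ring

lemma tendsto_inv_alphaScale_mul_integral (G : ℝ → ℝ) (hG : Continuous G) :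
    Tendsto (fun n : ℕ => (alphaScale n)⁻¹ * ∫ k in -(π / 2)..π / 2, G k * lam1 k ^ n)
      atTop (𝓝 (G 0)) := by
  have hπ := pi_pos
  have hmax : ∀ y ∈ Icc (-(π / 2)) (π / 2), y ≠ 0 → lam1 y < lam1 0 := fun y hy hy0 =>
    lam1_zero ▸ lam1_lt_one ((cos_le_one y).lt_of_ne
      (mt (cos_eq_one_iff_of_lt_of_lt (by linarith [hy.1]) (by linarith [hy.2])).1 hy0))
  have h0 : (0 : ℝ) ∈ closure (interior (Icc (-(π / 2)) (π / 2))) := by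
    rw [interior_Icc]; exact subset_closure ⟨by linarith, by linarith⟩
  refine (tendsto_setIntegral_pow_smul_of_unique_maximum_of_isCompact_of_continuousOn
    (μ := volume) isCompact_Icc continuous_lam1.continuousOn hmax (fun x hx => lam1_nonneg hx)
    (by rw [lam1_zero]; exact one_pos) h0 hG.continuousOn).congr fun n => ?_
  simp only [alphaScale, intervalIntegral.integral_of_le (by linarith : -(π / 2) ≤ π / 2),
    integral_Icc_eq_integral_Ioc, smul_eq_mul]
  simp_rw [mul_comm (G _)]

lemma tendsto_inv_alphaScale_mul_integral_lam1_pow {g : ℝ → ℝ} (hg : Continuous g)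
    (hp : Function.Periodic g (2 * π)) {φ : ℕ → ℕ} (hφ : Tendsto φ atTop atTop) {s : ℝ}
    (hs : ∀ᶠ n in atTop, (-1 : ℝ) ^ φ n = s) :
    Tendsto (fun n => (alphaScale (φ n))⁻¹ * ∫ k in -π..π, g k * lam1 k ^ φ n) atTop
      (𝓝 (g 0 + s * g π)) := by
  have h := (tendsto_inv_alphaScale_mul_integral (fun k => g k + s * g (k + π))
    (by fun_prop)).comp hφ
  rw [zero_add] at h
  refine h.congr' ?_
  filter_upwards [hs] with n hn
  simp only [Function.comp, integral_mul_lam1_pow_eq hg hp, hn]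

lemma tendsto_ofReal_inv_mul_of_norm_le_geometric {F : ℕ → ℂ} {α : ℕ → ℝ} {C c q r : ℝ}
    (hc : 0 < c) (hq : 0 ≤ q) (hqr : q < r) (hF : ∀ n, ‖F n‖ ≤ q ^ n * C)
    (hα : ∀ n, c * r ^ n ≤ α n) :
    Tendsto (fun n => (α n : ℂ)⁻¹ * F n) atTop (𝓝 0) := by
  have hr : 0 < r := hq.trans_lt hqr
  have hgeom := (tendsto_pow_atTop_nhds_zero_of_lt_one (div_nonneg hq hr.le)
    ((div_lt_one hr).2 hqr)).const_mul (C / c)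
  rw [mul_zero] at hgeom
  refine squeeze_zero_norm (fun n => ?_) hgeom
  have hcr : 0 < c * r ^ n := by positivity
  rw [norm_mul, norm_inv, Complex.norm_real, Real.norm_eq_abs, abs_of_pos (hcr.trans_le (hα n))]
  calc (α n)⁻¹ * ‖F n‖ ≤ (c * r ^ n)⁻¹ * (q ^ n * C) :=
        mul_le_mul (inv_anti₀ hcr (hα n)) (hF n) (norm_nonneg _) (inv_nonneg.2 hcr.le)
    _ = C / c * (q / r) ^ n := by
        rw [div_pow]; field_simp

lemma norm_ofReal_mul_pow_le {a B q : ℝ} {z : ℂ} (ha : ‖a‖ ≤ B) (hz : ‖z‖ ≤ q) (n : ℕ) :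
    ‖(a : ℂ) * z ^ n‖ ≤ q ^ n * B := by
  rw [norm_mul, norm_pow, Complex.norm_real, mul_comm]
  exact mul_le_mul (pow_le_pow_left₀ (norm_nonneg _) hz n) ha (norm_nonneg _)
    (pow_nonneg ((norm_nonneg _).trans hz) n)

lemma tendsto_inv_alphaScale_mul_integral_lam0_lam2_lam3 {g₀ g₂ g₃ : ℝ → ℝ}
    (hg₀ : Continuous g₀) (hg₂ : Continuous g₂) (hg₃ : Continuous g₃) :
    Tendsto (fun n : ℕ => ((alphaScale n : ℂ))⁻¹ *
        ∫ k in -π..π, ((g₀ k : ℂ) * (lam0 k : ℂ) ^ n + (g₂ k : ℂ) * lam2 k ^ n +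
          (g₃ k : ℂ) * lam3 k ^ n))
      atTop (𝓝 0) := by
  have hπ := pi_pos
  obtain ⟨B₀, hB₀⟩ := (isCompact_Icc (a := -π) (b := π)).exists_bound_of_continuousOn
    hg₀.continuousOn
  obtain ⟨B₂, hB₂⟩ := (isCompact_Icc (a := -π) (b := π)).exists_bound_of_continuousOn
    hg₂.continuousOn
  obtain ⟨B₃, hB₃⟩ := (isCompact_Icc (a := -π) (b := π)).exists_bound_of_continuousOn
    hg₃.continuousOn
  obtain ⟨c, hc, hα⟩ := exists_pos_mul_pow_le_intervalIntegral_pow continuous_lam1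
    (x₀ := 0) ⟨by linarith, by linarith⟩ (fun x hx => lam1_nonneg hx) (r := 9 / 10)
    (by norm_num) (by rw [lam1_zero]; norm_num)
  refine tendsto_ofReal_inv_mul_of_norm_le_geometric hc (q := 5 / 6)
    (C := (B₀ + B₂ + B₃) * |π - -π|) (by norm_num) (by norm_num) (fun n => ?_) hα
  refine (intervalIntegral.norm_integral_le_of_norm_le_const fun k hk => ?_).trans_eq
    (mul_assoc _ _ (|π - -π|))
  have hk : k ∈ Icc (-π) π := by
    simpa [uIcc_of_le (by linarith : -π ≤ π)] using uIoc_subset_uIcc hk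
  calc _ ≤ _ := norm_add₃_le
    _ ≤ (5 / 6) ^ n * B₀ + (5 / 6) ^ n * B₂ + (5 / 6) ^ n * B₃ := by
        gcongr
        · exact norm_ofReal_mul_pow_le (hB₀ k hk) (norm_lam0_le k) n
        · exact norm_ofReal_mul_pow_le (hB₂ k hk) (norm_lam2_le k) n
        · exact norm_ofReal_mul_pow_le (hB₃ k hk) (norm_lam3_le k) n
    _ = (5 / 6) ^ n * (B₀ + B₂ + B₃) := by ring

theorem oqrw_example5_asymptotics_general
    (g₀ g₁ g₂ g₃ : ℝ → ℝ)
    (hg₀ : Continuous g₀) (hg₁ : Continuous g₁) (hg₂ : Continuous g₂)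
    (hg₃ : Continuous g₃)
    (hp₁ : Function.Periodic g₁ (2 * Real.pi)) :
    Tendsto (fun n : ℕ => ((alphaScale n : ℂ))⁻¹ *
        ∫ k in (-Real.pi)..Real.pi,
          ((g₀ k : ℂ) * ((lam0 k : ℂ)) ^ n + (g₂ k : ℂ) * lam2 k ^ n +
            (g₃ k : ℂ) * lam3 k ^ n))
      atTop (nhds 0) ∧
    Tendsto (fun n : ℕ => (alphaScale (2 * n))⁻¹ *
        ∫ k in (-Real.pi)..Real.pi, g₁ k * lam1 k ^ (2 * n))
      atTop (nhds (g₁ 0 + g₁ Real.pi)) ∧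
    Tendsto (fun n : ℕ => (alphaScale (2 * n - 1))⁻¹ *
        ∫ k in (-Real.pi)..Real.pi, g₁ k * lam1 k ^ (2 * n - 1))
      atTop (nhds (g₁ 0 - g₁ Real.pi)) := by
  refine ⟨tendsto_inv_alphaScale_mul_integral_lam0_lam2_lam3 hg₀ hg₂ hg₃, ?_, ?_⟩
  · simpa using tendsto_inv_alphaScale_mul_integral_lam1_pow hg₁ hp₁ (s := 1)
      (tendsto_atTop_atTop.2 fun b => ⟨b, fun n hn => by omega⟩)
      (Eventually.of_forall fun n => (Even.neg_one_pow ⟨n, two_mul n⟩))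
  · simpa [← sub_eq_add_neg] using tendsto_inv_alphaScale_mul_integral_lam1_pow hg₁ hp₁ (s := -1)
      (tendsto_atTop_atTop.2 fun b => ⟨b + 1, fun n hn => by omega⟩)
      ((eventually_ge_atTop 1).mono fun n hn => Odd.neg_one_pow ⟨n - 1, by omega⟩)

/-- Example 5, asymptotics: for continuous `2π`-periodic `g₀, g₁, g₂, g₃`,
the contributions of `λ₀, λ₂, λ₃` vanish relative to `α_n`, while
`(1/α_{2n}) ∫ g₁ λ₁^{2n} → g₁(0) + g₁(π)` and
`(1/α_{2n-1}) ∫ g₁ λ₁^{2n-1} → g₁(0) - g₁(π)`. -/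
theorem oqrw_example5_asymptotics
    (g₀ g₁ g₂ g₃ : ℝ → ℝ)
    (hg₀ : Continuous g₀) (hg₁ : Continuous g₁) (hg₂ : Continuous g₂)
    (hg₃ : Continuous g₃)
    (hp₀ : Function.Periodic g₀ (2 * Real.pi)) (hp₁ : Function.Periodic g₁ (2 * Real.pi))
    (hp₂ : Function.Periodic g₂ (2 * Real.pi)) (hp₃ : Function.Periodic g₃ (2 * Real.pi)) :
    Tendsto (fun n : ℕ => ((alphaScale n : ℂ))⁻¹ *
        ∫ k in (-Real.pi)..Real.pi,
          ((g₀ k : ℂ) * ((lam0 k : ℂ)) ^ n + (g₂ k : ℂ) * lam2 k ^ n +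
            (g₃ k : ℂ) * lam3 k ^ n))
      atTop (nhds 0) ∧
    Tendsto (fun n : ℕ => (alphaScale (2 * n))⁻¹ *
        ∫ k in (-Real.pi)..Real.pi, g₁ k * lam1 k ^ (2 * n))
      atTop (nhds (g₁ 0 + g₁ Real.pi)) ∧
    Tendsto (fun n : ℕ => (alphaScale (2 * n - 1))⁻¹ *
        ∫ k in (-Real.pi)..Real.pi, g₁ k * lam1 k ^ (2 * n - 1))
      atTop (nhds (g₁ 0 - g₁ Real.pi)) :=
  oqrw_example5_asymptotics_general g₀ g₁ g₂ g₃ hg₀ hg₁ hg₂ hg₃ hp₁
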